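/- Let p and q be coprime integers with 1 < p < q. Then every coefficient of Δ_{p,q}(X) lies in the set {−1, 0, 1}. -/

import Mathlib

/-!
In `ℤ⟦X⟧` the defining identity gives
`Δ / (1 - X) = (1 - X ^ (p * q)) / ((1 - X ^ p) * (1 - X ^ q))`, which is
`(∑_{b < p} X ^ (q * b)) * ∑_a X ^ (p * a)`.
The `n`-th coefficient of the right-hand side counts the `b < p` with `q * b ≤ n` and
`q * b ≡ n [MOD p]`; since `q` is invertible modulo `p` there is at most one such `b`.
So `Δ` is `1 - X` times a series with coefficients in `{0, 1}`.
-/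

open Polynomial Finset

namespace PowerSeries

variable {R : Type*} [CommRing R]

theorem expand_mk_one_mul_one_sub_X_pow {p : ℕ} (hp : p ≠ 0) :
    expand p hp (mk 1 : R⟦X⟧) * (1 - X ^ p) = 1 := by
  simpa [expand_X] using congrArg (expand p hp) (mk_one_mul_one_sub_eq_one (S := R))

theorem coeff_X_pow_mul_expand_mk_one {p : ℕ} (hp : p ≠ 0) (k n : ℕ) :
    coeff n (X ^ k * expand p hp (mk 1 : R⟦X⟧)) = if k ≤ n ∧ p ∣ n - k then 1 else 0 := by
  rw [coeff_X_pow_mul', coeff_expand]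
  split_ifs <;> simp_all

theorem coeff_sum_X_pow_mul_expand_mk_one {ι : Type*} {p : ℕ} (hp : p ≠ 0) (s : Finset ι)
    (e : ι → ℕ) (n : ℕ) :
    coeff n ((∑ i ∈ s, X ^ e i) * expand p hp (mk 1 : R⟦X⟧)) =
      (#{i ∈ s | e i ≤ n ∧ p ∣ n - e i} : R) := by
  simp only [sum_mul, map_sum, coeff_X_pow_mul_expand_mk_one, sum_boole]

theorem coeff_mul_one_sub_X_mem_of_coeff_mem (f : ℤ⟦X⟧)
    (hf : ∀ n, coeff n f ∈ ({0, 1} : Set ℤ)) (n : ℕ) :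
    coeff n (f * (1 - X)) ∈ ({-1, 0, 1} : Set ℤ) := by
  rw [mul_sub, mul_one, map_sub]
  rcases n with _ | n
  · simpa [or_assoc] using Or.inr (hf 0)
  · rw [coeff_succ_mul_X]
    have h₁ := hf (n + 1)
    have h₀ := hf n
    simp only [Set.mem_insert_iff, Set.mem_singleton_iff] at h₀ h₁ ⊢
    omega

theorem eq_mul_expand_mk_one_mul_one_sub_X {p : ℕ} (hp : p ≠ 0) {f g : R⟦X⟧}
    (h : f * (1 - X ^ p) = g * (1 - X)) : f = g * expand p hp (mk 1) * (1 - X) := by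
  calc f = f * (expand p hp (mk 1) * (1 - X ^ p)) := by
        rw [expand_mk_one_mul_one_sub_X_pow, mul_one]
    _ = g * expand p hp (mk 1) * (1 - X) := by linear_combination expand p hp (mk 1) * h

end PowerSeries

theorem Nat.card_filter_range_dvd_sub_mul_le_one {p q : ℕ} (hcop : p.Coprime q) (n : ℕ) :
    #{b ∈ range p | q * b ≤ n ∧ p ∣ n - q * b} ≤ 1 := by
  refine card_le_one.2 fun b hb b' hb' => ?_
  simp only [mem_filter, mem_range] at hb hb'
  have h : q * b ≡ q * b' [MOD p] :=
    ((Nat.modEq_iff_dvd' hb.2.1).2 hb.2.2).trans ((Nat.modEq_iff_dvd' hb'.2.1).2 hb'.2.2).symm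
  exact (h.cancel_left_of_coprime hcop).eq_of_lt_of_lt hb.1 hb'.1

theorem Polynomial.mul_one_sub_X_pow_eq_sum_mul_one_sub_X {R : Type*} [CommRing R] [IsDomain R]
    {p q : ℕ} (hq : q ≠ 0) {Δ : R[X]}
    (hΔ : Δ * ((X ^ p - 1) * (X ^ q - 1)) = (X ^ (p * q) - 1) * (X - 1)) :
    Δ * (1 - X ^ p) = (∑ b ∈ range p, X ^ (q * b)) * (1 - X) := by
  have hgeom : (∑ b ∈ range p, X ^ (q * b) : R[X]) * (X ^ q - 1) = X ^ (p * q) - 1 := by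
    simpa [pow_mul, mul_comm p q] using geom_sum_mul (X ^ q : R[X]) p
  refine mul_right_cancel₀ (X_pow_sub_C_ne_zero (Nat.pos_of_ne_zero hq) (1 : R)) ?_
  simp only [map_one]
  linear_combination -hΔ - (1 - X) * hgeom

theorem torus_knot_alexander_coeffs_pm_one (p q : ℕ) (hp : 1 < p) (hpq : p < q)
    (hcop : Nat.Coprime p q) (Δ : ℤ[X])
    (hΔ : Δ * ((X ^ p - 1) * (X ^ q - 1)) = (X ^ (p * q) - 1) * (X - 1)) :
    ∀ n : ℕ, Δ.coeff n ∈ ({-1, 0, 1} : Set ℤ) := by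
  have hp₀ : p ≠ 0 := by omega
  have hseries : (Δ : PowerSeries ℤ) * (1 - PowerSeries.X ^ p) =
      (∑ b ∈ range p, PowerSeries.X ^ (q * b)) * (1 - PowerSeries.X) := by
    simpa only [map_mul, map_sub, map_sum, map_pow, map_one, coeToPowerSeries.ringHom_apply,
      coe_X] using congrArg coeToPowerSeries.ringHom
      (mul_one_sub_X_pow_eq_sum_mul_one_sub_X (by omega) hΔ)
  intro n
  rw [← coeff_coe, PowerSeries.eq_mul_expand_mk_one_mul_one_sub_X hp₀ hseries]
  refine PowerSeries.coeff_mul_one_sub_X_mem_of_coeff_mem _ (fun m => ?_) n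
  rw [PowerSeries.coeff_sum_X_pow_mul_expand_mk_one]
  have := Nat.card_filter_range_dvd_sub_mul_le_one hcop m
  interval_cases #{b ∈ range p | q * b ≤ m ∧ p ∣ m - q * b} <;> simp
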